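/- arXiv:math/0301298 — 5 statements merged into one kernel-verified Lean document; each statement's English description precedes it below -/
import Mathlib

section
/- Let X and Y be sets and E ⊆ X × Y. Suppose E has the '3 of 4 property': for any distinct x₁ ≠ x₂ in X and distinct y₁ ≠ y₂ in Y, if three of the four pairs (xᵢ, yⱼ) belong to E then so does the fourth. Then there exists an index set T, pairwise disjoint subsets {X_t}_{t∈T} of X, and pairwise disjoint subsets {Y_t}_{t∈T} of Y, such that E = ⋃_{t∈T} X_t × Y_t. -/
/-- The "3 of 4 property": for any distinct `x₁ ≠ x₂` and distinct `y₁ ≠ y₂`, if three of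
the four pairs `(xᵢ, yⱼ)` belong to `E` then so does the fourth. -/
def ThreeOfFour {X Y : Type*} (E : Set (X × Y)) : Prop :=
  ∀ ⦃x₁ x₂ : X⦄ ⦃y₁ y₂ : Y⦄, x₁ ≠ x₂ → y₁ ≠ y₂ →
    (((x₁, y₁) ∈ E ∧ (x₁, y₂) ∈ E ∧ (x₂, y₁) ∈ E) → (x₂, y₂) ∈ E) ∧
    (((x₁, y₁) ∈ E ∧ (x₁, y₂) ∈ E ∧ (x₂, y₂) ∈ E) → (x₂, y₁) ∈ E) ∧
    (((x₁, y₁) ∈ E ∧ (x₂, y₁) ∈ E ∧ (x₂, y₂) ∈ E) → (x₁, y₂) ∈ E) ∧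
    (((x₁, y₂) ∈ E ∧ (x₂, y₁) ∈ E ∧ (x₂, y₂) ∈ E) → (x₁, y₁) ∈ E)

theorem three_of_four_union_of_rectangles {X : Type u} {Y : Type v}
    (E : Set (X × Y)) (hE : ThreeOfFour E) :
    ∃ (T : Type u) (Xt : T → Set X) (Yt : T → Set Y),
      Pairwise (Function.onFun Disjoint Xt) ∧ Pairwise (Function.onFun Disjoint Yt) ∧
      E = ⋃ t, Xt t ×ˢ Yt t := by
  set row : X → Set Y := fun x => {y | (x, y) ∈ E} with hrow
  -- rows that meet are equal
  have key : ∀ x x' y, (x, y) ∈ E → (x', y) ∈ E → row x = row x' := by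
    intro x x' y hx hx'
    rcases eq_or_ne x x' with rfl | hxx
    · rfl
    have step : ∀ a b : X, a ≠ b → (a, y) ∈ E → (b, y) ∈ E → row a ⊆ row b := by
      intro a b hab ha hb y' hy'
      rcases eq_or_ne y y' with rfl | hyy
      · exact hb
      · exact (hE hab hyy).1 ⟨ha, hy', hb⟩
    exact le_antisymm (step x x' hxx hx hx') (step x' x hxx.symm hx' hx)
  let s : Setoid X := ⟨fun a b => row a = row b,
    ⟨fun _ => rfl, fun h => h.symm, fun h h' => h.trans h'⟩⟩
  refine ⟨Quotient s, fun t => {x | Quotient.mk s x = t},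
    fun t => {y | ∃ x, Quotient.mk s x = t ∧ (x, y) ∈ E}, ?_, ?_, ?_⟩
  · intro t t' htt
    simp only [Function.onFun, Set.disjoint_left]
    intro x hx hx'
    exact htt (hx.symm.trans hx')
  · intro t t' htt
    simp only [Function.onFun, Set.disjoint_left]
    rintro y ⟨x, rfl, hx⟩ ⟨x', hx', hx'E⟩
    exact htt (((Quotient.sound (key x x' y hx hx'E) : (Quotient.mk s x : Quotient s) = Quotient.mk s x')).trans hx')
  · ext ⟨x, y⟩
    simp only [Set.mem_iUnion, Set.mem_prod, Set.mem_setOf_eq]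
    constructor
    · intro h
      exact ⟨Quotient.mk s x, rfl, x, rfl, h⟩
    · rintro ⟨t, rfl, x', hx', hE'⟩
      have : row x' = row x := Quotient.exact hx'
      have : y ∈ row x := this ▸ (hE' : y ∈ row x')
      exact this
end

section
/- Let A be the 2×2 matrix with entries a₁₁ = a₁₂ = a₂₂ = 1 and a₂₁ = 0, and let S_A : M₂(ℂ) → M₂(ℂ) be the Schur (entrywise) multiplication map X ↦ A ∘ X. Then the operator norm of S_A (with respect to the operator norm on M₂(ℂ)) equals 2/√3. -/
/-!
The Schur multiplier by `!![1, 1; 0, 1]` is the upper triangular truncation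
`X ↦ !![x₀₀, x₀₁; 0, x₁₁]`. If `‖X‖ ≤ 1`, the first row `(a, b)` and the second column `(b, d)` of
`X` are unit-bounded, and completing the square in the quadratic form `‖!![a, b; 0, d] v‖²` shows that
the truncation has norm at most `2/√3`. Equality is attained by the rotation with `cos θ = √(2/3)`,
`sin θ = √(1/3)`, whose truncation maps the unit vector `(sin θ, -cos θ)` to a vector of norm `2/√3`.
-/

open scoped Matrix.Norms.L2Operator

theorem sq_add_sq_le_four_thirds {α β δ x y : ℝ} (hrow : α ^ 2 + β ^ 2 ≤ 1)
    (hcol : β ^ 2 + δ ^ 2 ≤ 1) : (α * x + β * y) ^ 2 + (δ * y) ^ 2 ≤ 4 / 3 * (x ^ 2 + y ^ 2) := by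
  have hpos : 0 < 4 - 3 * α ^ 2 := by nlinarith [sq_nonneg β]
  have hdisc : (3 * α ^ 2 - 2) ^ 2 ≤ 4 - 3 * α ^ 2 - 9 * α ^ 2 * β ^ 2 := by
    nlinarith [sq_nonneg α]
  have hform : 0 ≤ (4 - 3 * α ^ 2) * x ^ 2 - 6 * α * β * x * y + y ^ 2 := by
    refine nonneg_of_mul_nonneg_right ?_ hpos
    calc 0 ≤ ((4 - 3 * α ^ 2) * x - 3 * α * β * y) ^ 2
          + (4 - 3 * α ^ 2 - 9 * α ^ 2 * β ^ 2) * y ^ 2 :=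
          add_nonneg (sq_nonneg _) (mul_nonneg ((sq_nonneg _).trans hdisc) (sq_nonneg y))
      _ = _ := by ring
  nlinarith [mul_le_mul_of_nonneg_right hcol (sq_nonneg y)]

theorem two_div_sqrt_three_sq : (2 / √3 : ℝ) ^ 2 = 4 / 3 := by
  rw [div_pow, Real.sq_sqrt (by norm_num)]
  norm_num

namespace Matrix

theorem hadamard_upperTriangularOnes {α : Type*} [MulZeroOneClass α]
    (X : Matrix (Fin 2) (Fin 2) α) : !![1, 1; 0, 1] ⊙ X = !![X 0 0, X 0 1; 0, X 1 1] := by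
  ext i j
  fin_cases i <;> fin_cases j <;> simp

variable {𝕜 : Type*} [RCLike 𝕜]

section

variable {m n : Type*} [Fintype m] [Fintype n] [DecidableEq n]

theorem l2_opNorm_le_of_mulVec_le {A : Matrix m n 𝕜} {C : ℝ} (hC : 0 ≤ C)
    (h : ∀ x : EuclideanSpace 𝕜 n, ‖(EuclideanSpace.equiv m 𝕜).symm (A *ᵥ x)‖ ≤ C * ‖x‖) :
    ‖A‖ ≤ C :=
  ContinuousLinearMap.opNorm_le_bound _ hC h

theorem sum_norm_sq_col_le_l2_opNorm_sq (A : Matrix m n 𝕜) (j : n) :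
    ∑ i, ‖A i j‖ ^ 2 ≤ ‖A‖ ^ 2 := by
  simpa [EuclideanSpace.norm_sq_eq] using
    pow_le_pow_left₀ (norm_nonneg _) (A.l2_opNorm_mulVec (PiLp.single 2 j 1)) 2

theorem sum_norm_sq_row_le_l2_opNorm_sq [DecidableEq m] (A : Matrix m n 𝕜) (i : m) :
    ∑ j, ‖A i j‖ ^ 2 ≤ ‖A‖ ^ 2 := by
  simpa [l2_opNorm_conjTranspose] using Aᴴ.sum_norm_sq_col_le_l2_opNorm_sq i

end

theorem norm_sq_fin_two (x : EuclideanSpace 𝕜 (Fin 2)) : ‖x‖ ^ 2 = ‖x 0‖ ^ 2 + ‖x 1‖ ^ 2 := by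
  simp [EuclideanSpace.norm_sq_eq, Fin.sum_univ_two]

theorem l2_opNorm_upperTriangular_le {a b d : 𝕜} (hrow : ‖a‖ ^ 2 + ‖b‖ ^ 2 ≤ 1)
    (hcol : ‖b‖ ^ 2 + ‖d‖ ^ 2 ≤ 1) : ‖!![a, b; 0, d]‖ ≤ 2 / √3 := by
  refine l2_opNorm_le_of_mulVec_le (by positivity) fun v => ?_
  rw [← sq_le_sq₀ (norm_nonneg _) (by positivity), mul_pow, two_div_sqrt_three_sq,
    norm_sq_fin_two, norm_sq_fin_two]
  simp only [cons_mulVec, empty_mulVec, dotProduct, Fin.sum_univ_two, cons_val_zero, cons_val_one,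
    cons_val_fin_one, zero_mul, zero_add, PiLp.continuousLinearEquiv_symm_apply]
  calc ‖a * v 0 + b * v 1‖ ^ 2 + ‖d * v 1‖ ^ 2
      ≤ (‖a‖ * ‖v 0‖ + ‖b‖ * ‖v 1‖) ^ 2 + (‖d‖ * ‖v 1‖) ^ 2 := by
        grw [norm_add_le, norm_mul, norm_mul, norm_mul]
    _ ≤ _ := sq_add_sq_le_four_thirds hrow hcol

theorem l2_opNorm_hadamard_upperTriangularOnes_le {X : Matrix (Fin 2) (Fin 2) 𝕜} (hX : ‖X‖ ≤ 1) :
    ‖!![1, 1; 0, 1] ⊙ X‖ ≤ 2 / √3 := by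
  have hX2 : ‖X‖ ^ 2 ≤ 1 := pow_le_one₀ (norm_nonneg X) hX
  rw [hadamard_upperTriangularOnes]
  apply l2_opNorm_upperTriangular_le
  · simpa [Fin.sum_univ_two] using (X.sum_norm_sq_row_le_l2_opNorm_sq 0).trans hX2
  · simpa [Fin.sum_univ_two] using (X.sum_norm_sq_col_le_l2_opNorm_sq 1).trans hX2

theorem rotation_mem_unitaryGroup {c s : ℝ} (h : c ^ 2 + s ^ 2 = 1) :
    !![(c : 𝕜), -s; s, c] ∈ unitaryGroup (Fin 2) 𝕜 := by
  rw [mem_unitaryGroup_iff]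
  ext i j
  fin_cases i <;> fin_cases j <;> simp [star_eq_conjTranspose, mul_apply, Fin.sum_univ_two] <;>
    ring_nf <;> exact_mod_cast by linear_combination h

theorem le_l2_opNorm_upperTriangular {c s : ℝ} (hc : c ^ 2 = 2 / 3) (hs : s ^ 2 = 1 / 3) :
    2 / √3 ≤ ‖!![(c : 𝕜), -s; 0, c]‖ := by
  set v : EuclideanSpace 𝕜 (Fin 2) := WithLp.toLp 2 ![(s : 𝕜), -c]
  have hv : ‖v‖ ^ 2 = 1 := by
    simp only [v, norm_sq_fin_two, cons_val_zero, cons_val_one, cons_val_fin_one, norm_neg,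
      RCLike.norm_ofReal, sq_abs]
    linear_combination hs + hc
  have hMv : !![(c : 𝕜), -s; 0, c] *ᵥ v = ![((2 * c * s : ℝ) : 𝕜), ((-c ^ 2 : ℝ) : 𝕜)] := by
    ext i
    fin_cases i <;> simp [v] <;> push_cast <;> ring
  have hMv_norm : ‖(EuclideanSpace.equiv (Fin 2) 𝕜).symm (!![(c : 𝕜), -s; 0, c] *ᵥ v)‖ ^ 2
      = 4 / 3 := by
    simp only [hMv, PiLp.continuousLinearEquiv_symm_apply, norm_sq_fin_two, cons_val_zero,
      cons_val_one, cons_val_fin_one, RCLike.norm_ofReal, sq_abs]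
    linear_combination (4 * s ^ 2 + c ^ 2 + 2 / 3) * hc + 8 / 3 * hs
  rw [← sq_le_sq₀ (by positivity) (norm_nonneg _)]
  calc (2 / √3) ^ 2 = _ := by rw [two_div_sqrt_three_sq, hMv_norm]
    _ ≤ (‖!![(c : 𝕜), -s; 0, c]‖ * ‖v‖) ^ 2 :=
      pow_le_pow_left₀ (norm_nonneg _) (l2_opNorm_mulVec _ v) 2
    _ = _ := by rw [mul_pow, hv, mul_one]

end Matrix

/-- The norm of the Schur multiplier `S_A` on `M₂(ℂ)`, where `A = !![1,1;0,1]`,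
equals `2/√3`.  Here `M₂(ℂ)` carries the operator norm induced by the Euclidean
norm on `ℂ²`, and `‖S_A‖ = sup {‖A ∘ X‖ : ‖X‖ ≤ 1}`. -/
theorem schur_multiplier_norm_two_by_two :
    sSup {c : ℝ | ∃ X : Matrix (Fin 2) (Fin 2) ℂ, ‖X‖ ≤ 1 ∧
        c = ‖Matrix.hadamard (!![1, 1; 0, 1] : Matrix (Fin 2) (Fin 2) ℂ) X‖} =
      2 / Real.sqrt 3 := by
  set S := {c : ℝ | ∃ X : Matrix (Fin 2) (Fin 2) ℂ, ‖X‖ ≤ 1 ∧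
      c = ‖Matrix.hadamard (!![1, 1; 0, 1] : Matrix (Fin 2) (Fin 2) ℂ) X‖}
  have hupper : ∀ c ∈ S, c ≤ 2 / √3 := by
    rintro _ ⟨X, hX, rfl⟩
    exact Matrix.l2_opNorm_hadamard_upperTriangularOnes_le hX
  have hc : √(2 / 3) ^ 2 = 2 / 3 := Real.sq_sqrt (by norm_num)
  have hs : √(1 / 3) ^ 2 = 1 / 3 := Real.sq_sqrt (by norm_num)
  set R : Matrix (Fin 2) (Fin 2) ℂ := !![(√(2 / 3) : ℂ), -√(1 / 3); √(1 / 3), √(2 / 3)]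
  have hR : ‖R‖ ≤ 1 := (CStarRing.norm_of_mem_unitary
    (Matrix.rotation_mem_unitaryGroup (by rw [hc, hs]; norm_num))).le
  refine le_antisymm (csSup_le ⟨_, R, hR, rfl⟩ hupper) (le_csSup_of_le ⟨_, hupper⟩ ⟨R, hR, rfl⟩ ?_)
  rw [Matrix.hadamard_upperTriangularOnes]
  exact Matrix.le_l2_opNorm_upperTriangular hc hs
end

section
/- Let E ⊆ ℕ × ℕ have the 3 of 4 property. If matrix units E_{ij}, E_{kl}, E_{mn} are supported in E (i.e., (i,j), (k,l), (m,n) ∈ E) and the operator product E_{ij} E_{kl}* E_{mn} is nonzero, then it equals E_{in} and (i,n) ∈ E. -/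
noncomputable section

/-- `ℓ²(ℕ)`. -/
abbrev H2 : Type := lp (fun _ : ℕ => ℂ) 2

/-- The standard basis vectors of `ℓ²(ℕ)`. -/
def e (i : ℕ) : H2 := lp.single 2 i 1

/-- The `(i,j)` matrix entry of a bounded operator on `ℓ²(ℕ)`. -/
def entry (X : H2 →L[ℂ] H2) (i j : ℕ) : ℂ := inner ℂ (e i) (X (e j))

open Classical in
/-- The characteristic function `χ_E` of a set `E ⊆ ℕ × ℕ`. -/
def chi (E : Set (ℕ × ℕ)) (i j : ℕ) : ℂ := if (i, j) ∈ E then 1 else 0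
/-- The matrix unit `E_{ij}` in `B(ℓ²)`, sending `e_j` to `e_i`. -/
def mUnit (i j : ℕ) : H2 →L[ℂ] H2 := (innerSL ℂ (e j)).smulRight (e i)

/-! Since `E_{kl}* = E_{lk}` and `E_{ij} E_{kl} = δ_{jk} E_{il}`, a nonzero triple product forces
`j = l` and `k = m`, and is then `E_{in}`. The pairs `(i,j), (k,j), (k,n)` are three corners of a
rectangle, so the 3 of 4 property puts the fourth corner `(i,n)` in `E`. -/

namespace ThreeOfFour

variable {X Y : Type*} {E : Set (X × Y)}

lemma mem_of_mem_of_mem_of_mem (hE : ThreeOfFour E) {x₁ x₂ : X} {y₁ y₂ : Y}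
    (h₁₁ : (x₁, y₁) ∈ E) (h₂₁ : (x₂, y₁) ∈ E) (h₂₂ : (x₂, y₂) ∈ E) : (x₁, y₂) ∈ E := by
  rcases eq_or_ne x₁ x₂ with rfl | hx
  · exact h₂₂
  rcases eq_or_ne y₁ y₂ with rfl | hy
  · exact h₁₁
  exact (hE hx hy).2.2.1 ⟨h₁₁, h₂₁, h₂₂⟩

end ThreeOfFour

lemma mUnit_apply (i j : ℕ) (x : H2) : mUnit i j x = (inner ℂ (e j) x : ℂ) • e i := rfl

lemma inner_e (i j : ℕ) : (inner ℂ (e i) (e j) : ℂ) = if i = j then 1 else 0 := by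
  rw [e, e, lp.inner_single_left]
  simp [lp.single_apply, Pi.single_apply]

lemma adjoint_mUnit (k l : ℕ) : ContinuousLinearMap.adjoint (mUnit k l) = mUnit l k := by
  refine ContinuousLinearMap.ext fun x => ext_inner_left ℂ fun y => ?_
  rw [ContinuousLinearMap.adjoint_inner_right, mUnit_apply, mUnit_apply,
    inner_smul_right, inner_smul_left, inner_conj_symm, mul_comm]

lemma mUnit_comp_mUnit (i j k l : ℕ) :
    mUnit i j ∘L mUnit k l = if j = k then mUnit i l else 0 := by
  ext1 x
  split_ifs with h
  · simp only [ContinuousLinearMap.comp_apply, mUnit_apply, inner_smul_right, inner_e, h,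
      if_true, mul_one]
  · simp [mUnit_apply, inner_e, h]

/-- If `E` has the 3 of 4 property, matrix units `E_{ij}, E_{kl}, E_{mn}` are supported in
`E`, and the product `E_{ij} E_{kl}* E_{mn}` is nonzero, then it equals `E_{in}` and
`(i,n) ∈ E`. -/
theorem matrix_unit_triple_product (E : Set (ℕ × ℕ)) (hE : ThreeOfFour E)
    (i j k l m n : ℕ) (hij : (i, j) ∈ E) (hkl : (k, l) ∈ E) (hmn : (m, n) ∈ E)
    (hne : mUnit i j ∘L (ContinuousLinearMap.adjoint (mUnit k l)) ∘L mUnit m n ≠ 0) :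
    mUnit i j ∘L (ContinuousLinearMap.adjoint (mUnit k l)) ∘L mUnit m n = mUnit i n ∧
      (i, n) ∈ E := by
  rw [adjoint_mUnit] at hne ⊢
  obtain rfl : k = m := by
    by_contra h
    simp [mUnit_comp_mUnit l k, h] at hne
  obtain rfl : j = l := by
    by_contra h
    simp [mUnit_comp_mUnit, h] at hne
  refine ⟨by simp only [mUnit_comp_mUnit, if_true], hE.mem_of_mem_of_mem_of_mem hij hkl hmn⟩
end
end

section
/- Let D ⊆ B(H) be a maximal abelian self-adjoint algebra (masa) and V ∈ B(H) a partial isometry normalizing D (V*DV ⊆ D and VDV* ⊆ D, and VV*, V*V ∈ D). Then for any bounded D-bimodule map Φ : B(H) → B(H), the operator Φ(V)V* commutes with D, hence Φ(V)V* = D_V ∈ D, and Φ(V) = D_V V. -/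
open ContinuousLinearMap

set_option maxHeartbeats 1000000 in
/-- If `V` is a partial isometry normalizing a masa `D` and `Φ` is a bounded
`D`-bimodule map, then `Φ(V)V*` commutes with `D`, hence equals some `D_V ∈ D`,
and `Φ(V) = D_V V`. -/
theorem bimodule_map_on_normalizing_partial_isometry
    {H : Type*} [NormedAddCommGroup H] [InnerProductSpace ℂ H] [CompleteSpace H]
    (D : StarSubalgebra ℂ (H →L[ℂ] H))
    (hcomm : ∀ a ∈ D, ∀ b ∈ D, a * b = b * a)
    (hmax : ∀ T : H →L[ℂ] H, (∀ d ∈ D, T * d = d * T) → T ∈ D)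
    (V : H →L[ℂ] H) (hpi : V * adjoint V * V = V)
    (hnorm₁ : ∀ d ∈ D, adjoint V * d * V ∈ D)
    (hnorm₂ : ∀ d ∈ D, V * d * adjoint V ∈ D)
    (hVV : V * adjoint V ∈ D) (hV'V : adjoint V * V ∈ D)
    (Φ : (H →L[ℂ] H) →L[ℂ] (H →L[ℂ] H))
    (hbim : ∀ d₁ ∈ D, ∀ d₂ ∈ D, ∀ T, Φ (d₁ * T * d₂) = d₁ * Φ T * d₂) :
    (∀ d ∈ D, (Φ V * adjoint V) * d = d * (Φ V * adjoint V)) ∧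
    ∃ DV ∈ D, Φ V * adjoint V = DV ∧ Φ V = DV * V := by
  have hpi' : adjoint V * V * adjoint V = adjoint V := by
    have := congrArg star hpi
    simpa [star_mul, star_eq_adjoint, adjoint_adjoint, mul_assoc] using this
  have key : ∀ d ∈ D, (Φ V * adjoint V) * d = d * (Φ V * adjoint V) := by
    intro d hd
    have he : adjoint V * d * V ∈ D := hnorm₁ d hd
    have hc : V * adjoint V * d = d * (V * adjoint V) := hcomm _ hVV d hd
    -- V * (V* d V) = d * V
    have hVe : V * (adjoint V * d * V) = d * V := by
      calc V * (adjoint V * d * V) = (V * adjoint V * d) * V := by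
            simp only [mul_assoc]
        _ = d * (V * adjoint V) * V := by rw [hc]
        _ = d * V := by rw [mul_assoc, hpi]
    have h1 : Φ (d * V) = d * Φ V := by
      simpa using hbim d hd 1 D.one_mem V
    have h2 : Φ (V * (adjoint V * d * V)) = Φ V * (adjoint V * d * V) := by
      simpa using hbim 1 D.one_mem _ he V
    have h3 : d * Φ V = Φ V * (adjoint V * d * V) := by
      rw [← h1, ← h2, hVe]
    -- (V* d V) * V* = V* * d
    have h4 : (adjoint V * d * V) * adjoint V = adjoint V * d := by
      calc (adjoint V * d * V) * adjoint V
          = adjoint V * (d * (V * adjoint V)) := by simp only [mul_assoc]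
        _ = adjoint V * (V * adjoint V * d) := by rw [hc]
        _ = (adjoint V * V * adjoint V) * d := by simp only [mul_assoc]
        _ = adjoint V * d := by rw [hpi']
    calc (Φ V * adjoint V) * d = Φ V * (adjoint V * d) := by rw [mul_assoc]
      _ = Φ V * ((adjoint V * d * V) * adjoint V) := by rw [h4]
      _ = (Φ V * (adjoint V * d * V)) * adjoint V := by simp only [mul_assoc]
      _ = (d * Φ V) * adjoint V := by rw [← h3]
      _ = d * (Φ V * adjoint V) := by rw [mul_assoc]
  refine ⟨key, Φ V * adjoint V, hmax _ key, rfl, ?_⟩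
  have hΦ : Φ V = Φ V * (adjoint V * V) := by
    have hV : V * (adjoint V * V) = V := by rw [← mul_assoc, hpi]
    have := hbim 1 D.one_mem _ hV'V V
    rw [one_mul, one_mul] at this
    rw [← this, hV]
  rw [mul_assoc]; exact hΦ
end

section
/- Let D ⊆ B(H) be a masa and T ∈ B(H) a normalizer of D with polar decomposition T = V|T|. For any bounded D-bimodule map Φ : B(H) → B(H), there exists D_T ∈ D with Φ(T) = D_T T, and D_T may be chosen depending only on V (so Φ(V|T|) = D_V V|T| where Φ(V) = D_V V). -/
open ContinuousLinearMap

/-- If `T = V|T|` is a normalizer of a masa `D`, with `V` a normalizing partial isometry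
and `|T| ∈ D`, and `Φ` is a bounded `D`-bimodule map, then there is `D_T ∈ D` with
`Φ(T) = D_T T`, and `D_T` may be chosen depending only on `V`, i.e. `Φ(V) = D_T V`. -/
theorem bimodule_map_on_normalizer
    {H : Type*} [NormedAddCommGroup H] [InnerProductSpace ℂ H] [CompleteSpace H]
    (D : StarSubalgebra ℂ (H →L[ℂ] H))
    (hcomm : ∀ a ∈ D, ∀ b ∈ D, a * b = b * a)
    (hmax : ∀ S : H →L[ℂ] H, (∀ d ∈ D, S * d = d * S) → S ∈ D)
    (V : H →L[ℂ] H) (hpi : V * adjoint V * V = V)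
    (hnorm₁ : ∀ d ∈ D, adjoint V * d * V ∈ D)
    (hnorm₂ : ∀ d ∈ D, V * d * adjoint V ∈ D)
    (M : H →L[ℂ] H) (hM : M ∈ D) (T : H →L[ℂ] H) (hT : T = V * M)
    (Φ : (H →L[ℂ] H) →L[ℂ] (H →L[ℂ] H))
    (hbim : ∀ d₁ ∈ D, ∀ d₂ ∈ D, ∀ S, Φ (d₁ * S * d₂) = d₁ * Φ S * d₂) :
    ∃ DT ∈ D, Φ T = DT * T ∧ Φ V = DT * V := by
  have h1 : (1 : H →L[ℂ] H) ∈ D := D.one_mem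
  have hVV : V * adjoint V ∈ D := by simpa using hnorm₂ 1 h1
  have hV'V : adjoint V * V ∈ D := by simpa using hnorm₁ 1 h1
  have hpi' : adjoint V * V * adjoint V = adjoint V := by
    have := congrArg star hpi
    simpa [star_eq_adjoint, adjoint_adjoint, star_mul, mul_assoc] using this
  set DT := Φ V * adjoint V with hDT
  have key : ∀ d ∈ D, d * Φ V = Φ V * (adjoint V * d * V) := by
    intro d hd
    have e1 : V * (adjoint V * d * V) = d * V := by
      calc V * (adjoint V * d * V) = (V * adjoint V * d) * V := by
            simp only [mul_assoc]
        _ = (d * (V * adjoint V)) * V := by rw [hcomm _ hVV d hd]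
        _ = d * V := by rw [mul_assoc, hpi]
    have h2 := hbim 1 h1 _ (hnorm₁ d hd) V
    have h3 := hbim d hd 1 h1 V
    simp only [one_mul, mul_one] at h2 h3
    rw [e1] at h2
    rw [← h3, h2]
  have hcommDT : ∀ d ∈ D, DT * d = d * DT := by
    intro d hd
    have hc2 := hcomm _ hVV d hd
    have : d * DT = DT * d := by
      calc d * DT = d * Φ V * adjoint V := by rw [hDT, mul_assoc]
        _ = Φ V * (adjoint V * d * V) * adjoint V := by rw [key d hd]
        _ = Φ V * (adjoint V * (d * (V * adjoint V))) := by
            simp only [mul_assoc]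
        _ = Φ V * (adjoint V * ((V * adjoint V) * d)) := by rw [hc2]
        _ = Φ V * ((adjoint V * V * adjoint V) * d) := by
            simp only [mul_assoc]
        _ = Φ V * (adjoint V * d) := by rw [hpi']
        _ = DT * d := by rw [hDT, mul_assoc]
    exact this.symm
  have hDTmem : DT ∈ D := hmax DT hcommDT
  have hΦV : Φ V = DT * V := by
    have h4 := hbim 1 h1 _ hV'V V
    simp only [one_mul] at h4
    have e2 : V * (adjoint V * V) = V := by rw [← mul_assoc, hpi]
    rw [e2] at h4
    rw [h4, hDT, mul_assoc]
  refine ⟨DT, hDTmem, ?_, hΦV⟩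
  have h5 := hbim 1 h1 M hM V
  simp only [one_mul] at h5
  rw [hT, h5, hΦV, mul_assoc]
end
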